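/- For q > 1, the q-Cesàro factorable matrix M on ℓ² with entries m_{ij} = (q−1)q^j/(q^{i+1}−1) for j ≤ i (0 otherwise) satisfies M Q M* = M* P M with P = diag{(q^{n+1}−1)(q^{n+2}+q^{n+1}−1)/[q^{n+1}(q^{n+2}−1)]} and Q = diag{1 + 1/q − 1/q^{n+1}}, and the inequalities Q ≥ I ≥ (1/2)P and (q+1)P ≥ I ≥ (1/(q+1))Q hold; hence M is both posinormal and coposinormal. -/

import Mathlib

/-!
Write `M = diag(a) L diag(c)` with `L` the lower triangular matrix of ones,
`aᵢ = (q-1)/(q^{i+1}-1)` and `cⱼ = q^j`, and let `P = diag(p)`, `Q = diag(r)`. The `(k, l)` entries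
of `M Q M*` and `M* P M` are `a_k a_l ∑_{j ≤ min k l} c_j² r_j` and
`c_k c_l ∑_{i ≥ max k l} a_i² p_i`. The given `p` and `r` make `a_m ∑_{j ≤ m} c_j² r_j = c_m` and
`c_m ∑_{i ≥ m} a_i² p_i = a_m`, the latter because `a_i² p_i = a_i/c_i - a_{i+1}/c_{i+1}`
telescopes; so both entries equal `a_{max k l} c_{min k l}`.

Conjugating the diagonal bounds then gives `M M* ≤ M Q M* = M* P M ≤ 2 M* M` and
`M* M ≤ (q+1) M* P M = (q+1) M Q M* ≤ (q+1)² M M*`.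
-/

open ContinuousLinearMap Filter Topology
open scoped lp

section Posinormal

variable {E : Type*} [NormedAddCommGroup E] [InnerProductSpace ℂ E] [CompleteSpace E]

def IsPosinormal (T : E →L[ℂ] E) : Prop :=
  ∃ γ : ℝ, 0 ≤ γ ∧ (((γ : ℂ) ^ 2) • (adjoint T ∘L T) - T ∘L adjoint T).IsPositive

theorem IsPosinormal.of_comp_adjoint_eq {A P Q : E →L[ℂ] E}
    (h : A ∘L Q ∘L adjoint A = adjoint A ∘L P ∘L A) {s t : ℝ} (hs : 0 ≤ s) (ht : 0 < t)
    (hQ : 1 ≤ (s : ℂ) • Q) (hP : (t : ℂ) • P ≤ 1) : IsPosinormal A := by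
  refine ⟨√(s / t), Real.sqrt_nonneg _, ?_⟩
  rw [← Complex.ofReal_pow, Real.sq_sqrt (div_nonneg hs ht.le)]
  change A * star A ≤ ((s / t : ℝ) : ℂ) • (star A * A)
  have hAPA : star A * ((t : ℂ) • P) * A ≤ star A * A := by
    simpa using star_left_conjugate_le_conjugate hP A
  calc A * star A = A * 1 * star A := by rw [mul_one]
    _ ≤ A * ((s : ℂ) • Q) * star A := star_right_conjugate_le_conjugate hQ A
    _ = ((s / t : ℝ) : ℂ) • (star A * ((t : ℂ) • P) * A) := by
      have h' : A * (Q * star A) = star A * (P * A) := h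
      simp only [mul_smul_comm, smul_mul_assoc, smul_smul, mul_assoc, h']
      congr 1
      push_cast
      field_simp [Complex.ofReal_ne_zero.2 ht.ne']
    _ ≤ ((s / t : ℝ) : ℂ) • (star A * A) := by
      rw [ContinuousLinearMap.le_def, ← smul_sub]
      exact IsPositive.smul_of_nonneg hAPA (by exact_mod_cast div_nonneg hs ht.le)

end Posinormal

section Lp

variable {ι : Type*}

theorem lp.apply_eq_inner_single [DecidableEq ι] (x : ℓ²(ι, ℂ)) (j : ι) :
    x j = inner ℂ (lp.single 2 j 1) x := by
  rw [lp.inner_single_left, RCLike.inner_apply', map_one, one_mul]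

theorem lp.adjoint_apply_eq_tsum [DecidableEq ι] {T : ℓ²(ι, ℂ) →L[ℂ] ℓ²(ι, ℂ)}
    (x : ℓ²(ι, ℂ)) (j : ι) :
    adjoint T x j = ∑' i, (starRingEnd ℂ) (T (lp.single 2 j 1) i) * x i := by
  rw [lp.apply_eq_inner_single, adjoint_inner_right, lp.inner_eq_tsum]
  exact tsum_congr fun i => RCLike.inner_apply' _ _

theorem lp.inner_self_eq_tsum_of_diagonal {T : ℓ²(ι, ℂ) →L[ℂ] ℓ²(ι, ℂ)} {d : ι → ℝ}
    (hT : ∀ f i, T f i = d i * f i) (x : ℓ²(ι, ℂ)) :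
    inner ℂ (T x) x = ((∑' i, d i * ‖x i‖ ^ 2 : ℝ) : ℂ) := by
  rw [lp.inner_eq_tsum, Complex.ofReal_tsum]
  refine tsum_congr fun i => ?_
  rw [hT, RCLike.inner_apply', map_mul, Complex.conj_ofReal, mul_assoc, Complex.conj_mul']
  push_cast
  ring

theorem lp.isPositive_of_diagonal {T : ℓ²(ι, ℂ) →L[ℂ] ℓ²(ι, ℂ)} {d : ι → ℝ}
    (hT : ∀ f i, T f i = d i * f i) (hd : ∀ i, 0 ≤ d i) : T.IsPositive := by
  refine (isPositive_iff_complex T).2 fun x => ?_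
  rw [lp.inner_self_eq_tsum_of_diagonal hT, RCLike.re_to_complex, Complex.ofReal_re]
  exact ⟨rfl, tsum_nonneg fun i => mul_nonneg (hd i) (sq_nonneg _)⟩

theorem lp.le_of_diagonal {S T : ℓ²(ι, ℂ) →L[ℂ] ℓ²(ι, ℂ)} {s t : ι → ℝ}
    (hS : ∀ f i, S f i = s i * f i) (hT : ∀ f i, T f i = t i * f i) (hst : ∀ i, s i ≤ t i) :
    S ≤ T := by
  refine lp.isPositive_of_diagonal (d := t - s) (fun f i => ?_) (fun i => sub_nonneg.2 (hst i))
  rw [sub_apply, lp.coeFn_sub, Pi.sub_apply, hS, hT, Pi.sub_apply, Complex.ofReal_sub]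
  ring

theorem lp.smul_apply_of_diagonal {T : ℓ²(ι, ℂ) →L[ℂ] ℓ²(ι, ℂ)} {d : ι → ℝ}
    (hT : ∀ f i, T f i = d i * f i) (c : ℝ) (f : ℓ²(ι, ℂ)) (i : ι) :
    ((c : ℂ) • T) f i = ((c * d i : ℝ) : ℂ) * f i := by
  rw [smul_apply, lp.coeFn_smul, Pi.smul_apply, hT, smul_eq_mul, Complex.ofReal_mul, mul_assoc]

theorem lp.one_apply_eq_mul (f : ℓ²(ι, ℂ)) (i : ι) :
    (1 : ℓ²(ι, ℂ) →L[ℂ] ℓ²(ι, ℂ)) f i = ((1 : ℝ) : ℂ) * f i := by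
  simp

theorem lp.ext_single {F : Type*} [AddCommMonoid F] [Module ℂ F] [TopologicalSpace F] [T2Space F]
    [DecidableEq ι] {S T : ℓ²(ι, ℂ) →L[ℂ] F}
    (h : ∀ i, S (lp.single 2 i 1) = T (lp.single 2 i 1)) : S = T := by
  refine lp.ext_continuousLinearMap ENNReal.ofNat_ne_top fun i => ?_
  ext
  exact h i

end Lp

theorem Finset.sum_range_succ_ite_le {R : Type*} [AddCommMonoid R] (f : ℕ → R) (k l : ℕ) :
    ∑ j ∈ Finset.range (k + 1), (if j ≤ l then f j else 0)
      = ∑ j ∈ Finset.range (min k l + 1), f j := by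
  rw [← Finset.sum_filter]
  congr 1
  ext j
  simp only [Finset.mem_filter, Finset.mem_range]
  omega

namespace Factorable

variable {a c : ℕ → ℝ} {M : ℓ²(ℕ, ℂ) →L[ℂ] ℓ²(ℕ, ℂ)}
  (hM : ∀ f i, M f i = a i * ∑ j ∈ Finset.range (i + 1), c j * f j)
include hM

theorem apply_single (l i : ℕ) :
    M (lp.single 2 l 1) i = if l ≤ i then ((a i * c l : ℝ) : ℂ) else 0 := by
  simp only [hM, lp.single_apply, Pi.single_apply, mul_ite, mul_one, mul_zero,
    Finset.sum_ite_eq', Finset.mem_range, Nat.lt_succ_iff]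
  split_ifs <;> push_cast <;> ring

theorem adjoint_apply_single (l j : ℕ) :
    adjoint M (lp.single 2 l 1) j = if j ≤ l then ((a l * c j : ℝ) : ℂ) else 0 := by
  rw [lp.apply_eq_inner_single, adjoint_inner_right, lp.inner_single_right,
    RCLike.inner_apply', apply_single hM, mul_one]
  split_ifs <;> simp

theorem comp_diagonal_comp_adjoint_apply_single {Q : ℓ²(ℕ, ℂ) →L[ℂ] ℓ²(ℕ, ℂ)} {r : ℕ → ℝ}
    (hQ : ∀ f i, Q f i = r i * f i) (l k : ℕ) :
    (M ∘L Q ∘L adjoint M) (lp.single 2 l 1) k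
      = ((a k * a l * ∑ j ∈ Finset.range (min k l + 1), c j ^ 2 * r j : ℝ) : ℂ) := by
  have hsum : ∑ j ∈ Finset.range (k + 1), c j * (r j * if j ≤ l then a l * c j else 0)
      = a l * ∑ j ∈ Finset.range (min k l + 1), c j ^ 2 * r j := by
    simp only [mul_ite, mul_zero, Finset.sum_range_succ_ite_le, Finset.mul_sum]
    exact Finset.sum_congr rfl fun j _ => by ring
  simp only [comp_apply, hM, hQ, adjoint_apply_single hM, mul_assoc, ← hsum]
  push_cast [apply_ite]
  rfl

theorem adjoint_comp_diagonal_comp_apply_single {P : ℓ²(ℕ, ℂ) →L[ℂ] ℓ²(ℕ, ℂ)} {p : ℕ → ℝ}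
    (hP : ∀ f i, P f i = p i * f i) (l k : ℕ) :
    (adjoint M ∘L P ∘L M) (lp.single 2 l 1) k
      = ((c k * c l * ∑' i, if max k l ≤ i then a i ^ 2 * p i else 0 : ℝ) : ℂ) := by
  have hterm : ∀ i, (if k ≤ i then a i * c k else 0) * (p i * if l ≤ i then a i * c l else 0)
      = c k * c l * if max k l ≤ i then a i ^ 2 * p i else 0 := by
    intro i
    by_cases hk : k ≤ i <;> by_cases hl : l ≤ i <;> simp [hk, hl]
    ring
  simp only [comp_apply, lp.adjoint_apply_eq_tsum, hP, apply_single hM]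
  rw [← tsum_mul_left, ← tsum_congr hterm, Complex.ofReal_tsum]
  push_cast [apply_ite]
  simp

theorem comp_diagonal_comp_adjoint_eq {P Q : ℓ²(ℕ, ℂ) →L[ℂ] ℓ²(ℕ, ℂ)} {p r : ℕ → ℝ}
    (hP : ∀ f i, P f i = p i * f i) (hQ : ∀ f i, Q f i = r i * f i)
    (hr : ∀ m, a m * ∑ j ∈ Finset.range (m + 1), c j ^ 2 * r j = c m)
    (hp : ∀ m, c m * ∑' i, (if m ≤ i then a i ^ 2 * p i else 0) = a m) :
    M ∘L Q ∘L adjoint M = adjoint M ∘L P ∘L M := by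
  refine lp.ext_single fun l => lp.ext <| funext fun k => ?_
  rw [comp_diagonal_comp_adjoint_apply_single hM hQ, adjoint_comp_diagonal_comp_apply_single hM hP]
  congr 1
  rcases le_total k l with h | h
  · rw [min_eq_left h, max_eq_right h, mul_right_comm, hr, mul_assoc, hp, mul_comm]
  · rw [min_eq_right h, max_eq_left h, mul_assoc, hr, mul_right_comm, hp]

end Factorable

theorem Antitone.hasSum_sub_succ {t : ℕ → ℝ} (ht : Antitone t) {l : ℝ}
    (htl : Tendsto t atTop (𝓝 l)) : HasSum (fun i => t i - t (i + 1)) (t 0 - l) := by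
  rw [hasSum_iff_tendsto_nat_of_nonneg fun i => sub_nonneg.2 (ht i.le_succ)]
  simp only [Finset.sum_range_sub']
  exact tendsto_const_nhds.sub htl

theorem Antitone.hasSum_ite_le_sub_succ {t : ℕ → ℝ} (ht : Antitone t)
    (ht0 : Tendsto t atTop (𝓝 0)) (m : ℕ) :
    HasSum (fun i => if m ≤ i then t i - t (i + 1) else 0) (t m) := by
  refine (hasSum_nat_add_iff' m).1 ?_
  have hhead : ∑ i ∈ Finset.range m, (if m ≤ i then t i - t (i + 1) else 0) = 0 :=
    Finset.sum_eq_zero fun i hi => if_neg (by simpa using hi)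
  have htail := (ht.comp_monotone fun _ _ h => Nat.add_le_add_right h m).hasSum_sub_succ
    (ht0.comp (tendsto_add_atTop_nat m))
  simpa [hhead, add_right_comm] using htail

namespace QCesaro

variable {q : ℝ}

noncomputable def rowFactor (q : ℝ) (i : ℕ) : ℝ := (q - 1) / (q ^ (i + 1) - 1)

noncomputable def diagP (q : ℝ) (n : ℕ) : ℝ :=
  ((q ^ (n + 1) - 1) * (q ^ (n + 2) + q ^ (n + 1) - 1)) / (q ^ (n + 1) * (q ^ (n + 2) - 1))

noncomputable def diagQ (q : ℝ) (n : ℕ) : ℝ := 1 + 1 / q - 1 / q ^ (n + 1)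

noncomputable def tail (q : ℝ) (n : ℕ) : ℝ := rowFactor q n / q ^ n

theorem one_le_diagQ (hq : 1 < q) (n : ℕ) : 1 ≤ diagQ q n := by
  have : 1 / q ^ (n + 1) ≤ 1 / q :=
    one_div_le_one_div_of_le (by positivity) (le_self_pow₀ hq.le n.add_one_ne_zero)
  unfold diagQ
  linarith

theorem diagQ_le (hq : 1 < q) (n : ℕ) : diagQ q n ≤ q + 1 := by
  have h1 : 0 < 1 / q ^ (n + 1) := by positivity
  have h2 : 1 / q ≤ 1 := by rw [div_le_one (by positivity)]; exact hq.le
  unfold diagQ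
  linarith

theorem diagP_le_two (hq : 1 < q) (n : ℕ) : diagP q n ≤ 2 := by
  have hx : 1 < q ^ (n + 1) := one_lt_pow₀ hq n.add_one_ne_zero
  have hqx : 1 < q * q ^ (n + 1) := one_lt_mul_of_lt_of_le hq hx.le
  unfold diagP
  rw [pow_succ' q (n + 1), div_le_iff₀ (mul_pos (by positivity) (sub_pos.2 hqx))]
  nlinarith [sq_nonneg (q ^ (n + 1))]

theorem one_le_mul_diagP (hq : 1 < q) (n : ℕ) : 1 ≤ (q + 1) * diagP q n := by
  have hx : q ≤ q ^ (n + 1) := le_self_pow₀ hq.le n.add_one_ne_zero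
  have hqx : 1 < q * q ^ (n + 1) := one_lt_mul_of_lt_of_le hq (hq.le.trans hx)
  unfold diagP
  rw [pow_succ' q (n + 1), ← mul_div_assoc, le_div_iff₀ (mul_pos (by positivity) (sub_pos.2 hqx))]
  -- With `x = q ^ (n + 1) ≥ q` the claim is `(q² + q + 1) x² - (q² + 3q + 1) x + q + 1 ≥ 0`;
  -- this quadratic equals `(q² - 1)²` at `x = q` and is increasing on `x ≥ q`.
  nlinarith [mul_nonneg (sub_nonneg.2 hx) (by nlinarith : (0:ℝ) ≤ 2 * q ^ 3 + q ^ 2 - q - 1),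
    mul_nonneg (mul_nonneg (sub_nonneg.2 hx) (sub_nonneg.2 hx))
      (by positivity : (0:ℝ) ≤ q ^ 2 + q + 1), sq_nonneg (q ^ 2 - 1)]

theorem sum_sq_pow_mul_diagQ (hq : 1 < q) (m : ℕ) :
    ∑ j ∈ Finset.range m, (q ^ j) ^ 2 * diagQ q j = q ^ m * (q ^ m - 1) / (q * (q - 1)) := by
  have hq0 : q ≠ 0 := by positivity
  have hq1 : q - 1 ≠ 0 := (sub_pos.2 hq).ne'
  induction m with
  | zero => simp
  | succ m ih =>
    rw [Finset.sum_range_succ, ih]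
    unfold diagQ
    field_simp
    ring

theorem rowFactor_mul_sum_sq_pow_mul_diagQ (hq : 1 < q) (m : ℕ) :
    rowFactor q m * ∑ j ∈ Finset.range (m + 1), (q ^ j) ^ 2 * diagQ q j = q ^ m := by
  have hq0 : q ≠ 0 := by positivity
  have hq1 : q - 1 ≠ 0 := (sub_pos.2 hq).ne'
  have hx : q ^ (m + 1) - 1 ≠ 0 := (sub_pos.2 (one_lt_pow₀ hq m.add_one_ne_zero)).ne'
  rw [sum_sq_pow_mul_diagQ hq, rowFactor]
  field_simp
  ring

theorem rowFactor_pos (hq : 1 < q) (n : ℕ) : 0 < rowFactor q n :=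
  div_pos (sub_pos.2 hq) (sub_pos.2 (one_lt_pow₀ hq n.add_one_ne_zero))

theorem rowFactor_le_one (hq : 1 < q) (n : ℕ) : rowFactor q n ≤ 1 :=
  div_le_one_of_le₀ (by linarith [le_self_pow₀ hq.le (n.add_one_ne_zero)])
    (sub_pos.2 (one_lt_pow₀ hq n.add_one_ne_zero)).le

theorem rowFactor_sq_mul_diagP (hq : 1 < q) (n : ℕ) :
    rowFactor q n ^ 2 * diagP q n = tail q n - tail q (n + 1) := by
  have hx : q ^ (n + 1) - 1 ≠ 0 := (sub_pos.2 (one_lt_pow₀ hq n.add_one_ne_zero)).ne'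
  have hy : q ^ (n + 2) - 1 ≠ 0 := (sub_pos.2 (one_lt_pow₀ hq (n + 1).add_one_ne_zero)).ne'
  have hq0 : q ≠ 0 := by positivity
  unfold tail rowFactor diagP
  field_simp
  ring

theorem antitone_tail (hq : 1 < q) : Antitone (tail q) := by
  refine antitone_nat_of_succ_le fun n => ?_
  have hp : 0 < diagP q n := by nlinarith [one_le_mul_diagP hq n]
  rw [← sub_nonneg, ← rowFactor_sq_mul_diagP hq]
  positivity

theorem tendsto_tail (hq : 1 < q) : Tendsto (tail q) atTop (𝓝 0) := by
  refine squeeze_zero (fun n => ?_) (fun n => ?_) (tendsto_pow_atTop_nhds_zero_of_lt_one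
    (inv_nonneg.2 (by positivity)) (inv_lt_one_of_one_lt₀ hq))
  · exact div_nonneg (rowFactor_pos hq n).le (by positivity)
  · rw [inv_pow, tail, div_eq_mul_inv]
    exact mul_le_of_le_one_left (by positivity) (rowFactor_le_one hq n)

theorem pow_mul_tsum_rowFactor_sq_mul_diagP (hq : 1 < q) (m : ℕ) :
    q ^ m * ∑' i, (if m ≤ i then rowFactor q i ^ 2 * diagP q i else 0) = rowFactor q m := by
  simp only [rowFactor_sq_mul_diagP hq,
    ((antitone_tail hq).hasSum_ite_le_sub_succ (tendsto_tail hq) m).tsum_eq]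
  exact mul_div_cancel₀ _ (by positivity)

end QCesaro

open QCesaro in
/-- For q > 1, the q-Cesàro factorable matrix satisfies M Q M* = M* P M with the
stated diagonal operators, and Q ≥ I ≥ (1/2)P and (q+1)P ≥ I ≥ (1/(q+1))Q;
hence M is both posinormal and coposinormal. -/
theorem qCesaro_posinormal_coposinormal (q : ℝ) (hq : 1 < q)
    (M P Q : lp (fun _ : ℕ => ℂ) 2 →L[ℂ] lp (fun _ : ℕ => ℂ) 2)
    (hM : ∀ f : lp (fun _ : ℕ => ℂ) 2, ∀ i : ℕ,
      M f i = (((q - 1 : ℝ) : ℂ) / ((q : ℂ) ^ (i + 1) - 1)) *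
        ∑ j ∈ Finset.range (i + 1), ((q : ℂ) ^ j) * f j)
    (hP : ∀ f : lp (fun _ : ℕ => ℂ) 2, ∀ n : ℕ,
      P f n = ((((q ^ (n + 1) - 1) * (q ^ (n + 2) + q ^ (n + 1) - 1)) /
        (q ^ (n + 1) * (q ^ (n + 2) - 1)) : ℝ) : ℂ) * f n)
    (hQ : ∀ f : lp (fun _ : ℕ => ℂ) 2, ∀ n : ℕ,
      Q f n = ((1 + 1 / q - 1 / q ^ (n + 1) : ℝ) : ℂ) * f n) :
    M ∘L Q ∘L adjoint M = adjoint M ∘L P ∘L M ∧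
    (Q - 1).IsPositive ∧
    ((1 : lp (fun _ : ℕ => ℂ) 2 →L[ℂ] lp (fun _ : ℕ => ℂ) 2) - (1 / 2 : ℂ) • P).IsPositive ∧
    ((((q + 1 : ℝ) : ℂ)) • P - 1).IsPositive ∧
    ((1 : lp (fun _ : ℕ => ℂ) 2 →L[ℂ] lp (fun _ : ℕ => ℂ) 2) - (((1 / (q + 1) : ℝ) : ℂ)) • Q).IsPositive ∧
    (∃ γ : ℝ, 0 ≤ γ ∧ (((γ : ℂ) ^ 2) • (adjoint M ∘L M) - M ∘L adjoint M).IsPositive) ∧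
    (∃ γ : ℝ, 0 ≤ γ ∧ (((γ : ℂ) ^ 2) • (M ∘L adjoint M) - adjoint M ∘L M).IsPositive) := by
  have hP' : ∀ f n, P f n = (diagP q n : ℂ) * f n := hP
  have hQ' : ∀ f n, Q f n = (diagQ q n : ℂ) * f n := hQ
  have hM' : ∀ f i,
      M f i = (rowFactor q i : ℂ) * ∑ j ∈ Finset.range (i + 1), ((q ^ j : ℝ) : ℂ) * f j := by
    intro f i
    rw [hM, rowFactor]
    push_cast
    rfl
  have hkey : M ∘L Q ∘L adjoint M = adjoint M ∘L P ∘L M :=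
    Factorable.comp_diagonal_comp_adjoint_eq hM' hP' hQ' (rowFactor_mul_sum_sq_pow_mul_diagQ hq)
      (pow_mul_tsum_rowFactor_sq_mul_diagP hq)
  have hQ1 : 1 ≤ Q := lp.le_of_diagonal lp.one_apply_eq_mul hQ' (one_le_diagQ hq)
  have hP2 : ((1 / 2 : ℝ) : ℂ) • P ≤ 1 :=
    lp.le_of_diagonal (lp.smul_apply_of_diagonal hP' _) lp.one_apply_eq_mul
      fun n => by linarith [diagP_le_two hq n]
  have hP1 : 1 ≤ ((q + 1 : ℝ) : ℂ) • P :=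
    lp.le_of_diagonal lp.one_apply_eq_mul (lp.smul_apply_of_diagonal hP' _) (one_le_mul_diagP hq)
  have hQ2 : ((1 / (q + 1) : ℝ) : ℂ) • Q ≤ 1 :=
    lp.le_of_diagonal (lp.smul_apply_of_diagonal hQ' _) lp.one_apply_eq_mul fun n => by
      rw [div_mul_eq_mul_div, one_mul, div_le_one (by linarith)]
      exact diagQ_le hq n
  have hco : IsPosinormal (adjoint M) :=
    .of_comp_adjoint_eq (by rw [adjoint_adjoint]; exact hkey.symm) (by linarith) (by positivity)
      hP1 hQ2
  rw [IsPosinormal, adjoint_adjoint] at hco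
  refine ⟨hkey, hQ1, by simpa [ContinuousLinearMap.le_def] using hP2, hP1, hQ2, ?_, hco⟩
  exact IsPosinormal.of_comp_adjoint_eq hkey zero_le_one (by norm_num) (by simpa using hQ1) hP2
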